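/- Let ε > 0 with 1/ε ∈ ℕ. Let T' be a finite set of tasks, all having identical weight w and identical demand d, together with a schedule P(i) ⊆ E for every i ∈ T', such that there is an edge f contained in each path P(i). Then there exist a subset S ⊆ T', a set of boxes B with |B| ≤ 1/ε², and a partition of S into sets {S_b}_{b∈B} such that: (1) Σ_{b∈B : e∈pb(b)} h(b) ≤ Σ_{i∈T' : e∈P(i)} d(i) for each edge e ∈ E; (2) w(S) ≥ (1−6ε)·w(T'); (3) for each box b ∈ B, the tasks in S_b fit into b. -/

import Mathlib

/-- A box `b`, given by a subpath `pb(b) = {lo, …, hi}` of the path, a height `h`,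
a demand `d` and a weight `w`. -/
structure Box where
  lo : ℕ
  hi : ℕ
  h : ℕ
  d : ℕ
  w : ℕ
deriving DecidableEq

/-- The subpath `pb(b)` of a box. -/
def Box.pb (b : Box) : Finset ℕ := Finset.Icc b.lo b.hi

/-- A set `S` of tasks with schedules `P` fits into a box `b`: the total demand of `S` is
at most the height of `b`, each task of `S` can be scheduled within `pb(b)`
(i.e. `|P(i) ∩ pb(b)| ≥ p(i)`), and every task of `S` has weight `w(b)` and demand `d(b)`. -/
def FitsP {ι : Type} [DecidableEq ι] (w d p : ι → ℕ) (P : ι → Finset ℕ)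
    (S : Finset ι) (b : Box) : Prop :=
  (∑ i ∈ S, d i) ≤ b.h ∧ ∀ i ∈ S, p i ≤ ((P i) ∩ b.pb).card ∧ w i = b.w ∧ d i = b.d

/-!
Sort the `n` tasks by start point and cut the order into `K = 1/ε` consecutive groups of
`s = ⌊n/K⌋ + 1` tasks; independently do the same by end point, latest first. A cell is a pair of
groups, and its box is the span of its tasks, of height `d₀` times its size. Dropping the first
group of each order loses at most `2s ≤ 4εn` tasks. On an edge `e` left of the common edge `f`,
each kept task whose box reaches `e` is charged injectively to the task `s` places earlier in
start order: that task starts no later than some task of the same start group, hence covers `e`.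
Right of `f` the same works with end points. If `n ≤ K²`, one box per task suffices.
-/

open Finset

variable {ι : Type*}

section Grouping

variable {α : Type*} [LinearOrder α]

theorem Finset.exists_bijOn_rank (T : Finset ι) (key : ι → α) :
    ∃ rank : ι → ℕ, Set.BijOn rank T (Set.Iio #T) ∧
      ∀ i ∈ T, ∀ j ∈ T, rank i ≤ rank j → key i ≤ key j := by
  classical
  let σ : Fin #T ≃ T := (Tuple.sort fun q => key (T.equivFin.symm q)).trans T.equivFin.symm
  have hσ : Monotone fun q => key (σ q) := Tuple.monotone_sort (fun q => key (T.equivFin.symm q))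
  refine ⟨fun i => if h : i ∈ T then σ.symm ⟨i, h⟩ else 0, ⟨?_, ?_, ?_⟩, ?_⟩
  · intro i (hi : i ∈ T)
    simp [hi]
  · intro i (hi : i ∈ T) j (hj : j ∈ T) h
    simpa [hi, hj, Fin.val_inj] using h
  · intro r hr
    exact ⟨σ ⟨r, hr⟩, (σ _).2, by simp⟩
  · intro i hi j hj h
    simpa using hσ (show σ.symm ⟨i, hi⟩ ≤ σ.symm ⟨j, hj⟩ by simpa [hi, hj] using h)

theorem exists_consecutive_grouping (T : Finset ι) (key : ι → α) {K s : ℕ} [NeZero K]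
    (hT : #T ≤ K * s) :
    ∃ grp : ι → Fin K, #{i ∈ T | grp i = 0} ≤ s ∧
      ∀ e, #{i ∈ T | grp i ≠ 0 ∧ ∃ j ∈ T, grp j = grp i ∧ key j ≤ e} ≤ #{i ∈ T | key i ≤ e} := by
  classical
  rcases Nat.eq_zero_or_pos s with rfl | hs
  · rw [mul_zero, Nat.le_zero, card_eq_zero] at hT
    subst hT
    exact ⟨0, by simp, by simp⟩
  obtain ⟨rank, ⟨hmaps, hinj, hsurj⟩, hkey⟩ := T.exists_bijOn_rank key
  have hgrp : ∀ i ∈ T, (Fin.ofNat K (rank i / s)).val = rank i / s := fun i hi =>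
    Nat.mod_eq_of_lt (Nat.div_lt_of_lt_mul ((hmaps hi).out.trans_le (hT.trans_eq (mul_comm _ _))))
  have hzero : ∀ i ∈ T, Fin.ofNat K (rank i / s) = 0 ↔ rank i < s := fun i hi => by
    rw [Fin.ext_iff, hgrp i hi, Fin.val_zero, Nat.div_eq_zero_iff_lt hs]
  refine ⟨fun i => Fin.ofNat K (rank i / s), ?_, fun e => ?_⟩
  · refine (card_le_card_of_injOn (t := range s) rank (fun i hi => ?_)
      (hinj.mono fun i hi => (mem_filter.1 hi).1)).trans_eq (card_range s)
    obtain ⟨hiT, h0⟩ := mem_filter.1 hi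
    exact mem_range.2 ((hzero i hiT).1 h0)
  -- each kept task is sent to the task `s` ranks earlier, which lies in the previous group
  calc _ ≤ #({i ∈ T | key i ≤ e}.image rank) := by
        refine card_le_card_of_injOn (fun i => rank i - s) (fun i hi => ?_) (fun i hi j hj h => ?_)
        · obtain ⟨hiT, hi0, j, hjT, hji, hje⟩ := mem_filter.1 hi
          have hsi := not_lt.1 (mt (hzero i hiT).2 hi0)
          rw [Fin.ext_iff, hgrp i hiT, hgrp j hjT] at hji
          have hlt : rank i - s < rank j := by
            have h₁ := Nat.lt_div_mul_add (a := rank i) hs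
            have h₂ := Nat.div_mul_le_self (rank j) s
            rw [hji] at h₂
            omega
          obtain ⟨k, hkT, hk⟩ := hsurj (show rank i - s ∈ Set.Iio #T from
            (Nat.sub_le _ _).trans_lt (hmaps hiT))
          exact mem_image.2 ⟨k, mem_filter.2 ⟨hkT, (hkey k hkT j hjT (by omega)).trans hje⟩, hk⟩
        · obtain ⟨hiT, hi0, -⟩ := mem_filter.1 hi
          obtain ⟨hjT, hj0, -⟩ := mem_filter.1 hj
          have hsi := not_lt.1 (mt (hzero i hiT).2 hi0)
          have hsj := not_lt.1 (mt (hzero j hjT).2 hj0)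
          exact hinj hiT hjT (by simp only at h; omega)
    _ ≤ _ := card_image_le

end Grouping

section Cells

/-- For empty `C` the span is junk, but the height is `0`. -/
noncomputable def cellBox (A B : ι → ℕ) (d₀ w₀ : ℕ) (C : Finset ι) : Box :=
  ⟨sInf (A '' C), C.sup B, d₀ * #C, d₀, w₀⟩

theorem mem_pb_cellBox {A B : ι → ℕ} {d₀ w₀ : ℕ} {C : Finset ι} (hC : C.Nonempty) {e : ℕ} :
    e ∈ (cellBox A B d₀ w₀ C).pb ↔ (∃ i ∈ C, A i ≤ e) ∧ ∃ i ∈ C, e ≤ B i := by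
  simp only [cellBox, Box.pb, mem_Icc]
  refine and_congr
    ⟨fun h => ?_, fun ⟨i, hi, h⟩ => (Nat.sInf_le (Set.mem_image_of_mem A (mem_coe.2 hi))).trans h⟩
    ⟨fun h => ?_, fun ⟨i, hi, h⟩ => h.trans (le_sup hi)⟩
  · obtain ⟨i, hi, hAi⟩ := Nat.sInf_mem ((coe_nonempty.2 hC).image A)
    exact ⟨i, hi, hAi ▸ h⟩
  · obtain ⟨i, hi, hBi⟩ := C.exists_mem_eq_sup hC B
    exact ⟨i, hi, hBi ▸ h⟩

theorem fitsP_cellBox {ι : Type} [DecidableEq ι] {w d p : ι → ℕ} {P : ι → Finset ℕ}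
    {A B : ι → ℕ} {d₀ w₀ : ℕ} {T C : Finset ι} (hCT : C ⊆ T) (hw : ∀ i ∈ T, w i = w₀)
    (hd : ∀ i ∈ T, d i = d₀) (hP : ∀ i ∈ T, P i = Icc (A i) (B i)) (hp : ∀ i ∈ T, #(P i) = p i) :
    FitsP w d p P C (cellBox A B d₀ w₀ C) := by
  refine ⟨?_, fun i hi => ⟨?_, hw i (hCT hi), hd i (hCT hi)⟩⟩
  · simp [cellBox, sum_congr rfl fun i hi => hd i (hCT hi), mul_comm]
  · rw [← hp i (hCT hi), inter_eq_left.2]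
    rw [hP i (hCT hi)]
    exact Icc_subset_Icc (Nat.sInf_le (Set.mem_image_of_mem A (mem_coe.2 hi))) (le_sup hi)

variable {J : Type*}

def CellSpans (A B : ι → ℕ) (S : Finset ι) (assign : ι → J) (e : ℕ) (i : ι) : Prop :=
  (∃ j ∈ S, assign j = assign i ∧ A j ≤ e) ∧ ∃ j ∈ S, assign j = assign i ∧ e ≤ B j

open Classical in
theorem sum_h_cellBox [Fintype J] [DecidableEq J] (A B : ι → ℕ) (d₀ w₀ : ℕ) (S : Finset ι)
    (assign : ι → J) (e : ℕ) :
    ∑ j ∈ univ.filter (fun j => e ∈ (cellBox A B d₀ w₀ {i ∈ S | assign i = j}).pb),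
      (cellBox A B d₀ w₀ {i ∈ S | assign i = j}).h =
      d₀ * #{i ∈ S | CellSpans A B S assign e i} := by
  simp_rw [show ∀ C, (cellBox A B d₀ w₀ C).h = d₀ * #C from fun _ => rfl]
  rw [← mul_sum, sum_card_fiberwise_eq_card_filter S _ assign]
  congr 1
  refine congrArg card (filter_congr fun i hi => ?_)
  rw [mem_filter, mem_pb_cellBox (C := {j ∈ S | assign j = assign i}) ⟨i, mem_filter.2 ⟨hi, rfl⟩⟩]
  simp [CellSpans, and_assoc]

open Classical in
theorem card_filter_cellSpans_le_of_injOn {A B : ι → ℕ} {S : Finset ι} {assign : ι → J}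
    (h : Set.InjOn assign S) (e : ℕ) :
    #{i ∈ S | CellSpans A B S assign e i} ≤ #{i ∈ S | A i ≤ e ∧ e ≤ B i} := by
  refine card_le_card fun i hi => ?_
  obtain ⟨hiS, ⟨j, hjS, hji, hAj⟩, ⟨k, hkS, hki, hBk⟩⟩ := mem_filter.1 hi
  rw [h hjS hiS hji] at hAj
  rw [h hkS hiS hki] at hBk
  exact mem_filter.2 ⟨hiS, hAj, hBk⟩

theorem Finset.exists_injOn_fin (T : Finset ι) {N : ℕ} [NeZero N] (h : #T ≤ N) :
    ∃ g : ι → Fin N, Set.InjOn g T := by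
  classical
  refine ⟨fun i => if hi : i ∈ T then Fin.castLE h (T.equivFin ⟨i, hi⟩) else 0,
    fun i (hi : i ∈ T) j (hj : j ∈ T) hij => ?_⟩
  simpa [hi, hj, Fin.castLE_inj] using hij

open Classical OrderDual in
theorem exists_grid_cells (T : Finset ι) (A B : ι → ℕ) (f : ℕ)
    (hAfB : ∀ i ∈ T, A i ≤ f ∧ f ≤ B i) {K : ℕ} [NeZero K] (hK : K * K < #T) :
    ∃ S ⊆ T, ∃ assign : ι → Fin (K * K), K * #T ≤ K * #S + 4 * #T ∧
      ∀ e, #{i ∈ S | CellSpans A B S assign e i} ≤ #{i ∈ T | A i ≤ e ∧ e ≤ B i} := by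
  set s := #T / K + 1
  have hTs : #T ≤ K * s := (Nat.lt_mul_div_succ _ (NeZero.pos K)).le
  obtain ⟨α, hα0, hαA⟩ := exists_consecutive_grouping T A hTs
  obtain ⟨β, hβ0, hβB⟩ := exists_consecutive_grouping T (fun i => toDual (B i)) hTs
  set S := {i ∈ T | α i ≠ 0 ∧ β i ≠ 0}
  refine ⟨S, filter_subset _ _, fun i => finProdFinEquiv (α i, β i), ?_, fun e => ?_⟩
  · have hdrop : #T ≤ #S + (s + s) :=
      calc #T ≤ #(S ∪ ({i ∈ T | α i = 0} ∪ {i ∈ T | β i = 0})) :=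
            card_le_card fun i hi => by simp [S, hi]; tauto
        _ ≤ _ := (card_union_le _ _).trans
            (Nat.add_le_add_left ((card_union_le _ _).trans (Nat.add_le_add hα0 hβ0)) _)
    have hKs : K * s ≤ #T + K := by
      have := Nat.mul_div_le #T K
      simp only [s, mul_add, mul_one]
      omega
    have hKT : K ≤ #T := (Nat.le_mul_self K).trans hK.le
    nlinarith
  · have hsame : ∀ i j, finProdFinEquiv (α j, β j) = finProdFinEquiv (α i, β i) →
        α j = α i ∧ β j = β i := by simp
    rcases le_total e f with hef | hfe
    · calc _ ≤ #{i ∈ T | α i ≠ 0 ∧ ∃ j ∈ T, α j = α i ∧ A j ≤ e} := card_le_card fun i hi => by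
            obtain ⟨hiS, ⟨j, hjS, hji, hAj⟩, -⟩ := mem_filter.1 hi
            obtain ⟨hiT, hαi, -⟩ := mem_filter.1 hiS
            exact mem_filter.2 ⟨hiT, hαi, j, (mem_filter.1 hjS).1, (hsame i j hji).1, hAj⟩
        _ ≤ #{i ∈ T | A i ≤ e} := hαA e
        _ ≤ _ := card_le_card fun i hi => by
            obtain ⟨hiT, hAi⟩ := mem_filter.1 hi
            exact mem_filter.2 ⟨hiT, hAi, hef.trans (hAfB i hiT).2⟩
    · calc _ ≤ #{i ∈ T | β i ≠ 0 ∧ ∃ j ∈ T, β j = β i ∧ toDual (B j) ≤ toDual e} :=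
            card_le_card fun i hi => by
              obtain ⟨hiS, -, ⟨j, hjS, hji, hBj⟩⟩ := mem_filter.1 hi
              obtain ⟨hiT, -, hβi⟩ := mem_filter.1 hiS
              exact mem_filter.2 ⟨hiT, hβi, j, (mem_filter.1 hjS).1, (hsame i j hji).2, hBj⟩
        _ ≤ #{i ∈ T | toDual (B i) ≤ toDual e} := hβB _
        _ ≤ _ := card_le_card fun i hi => by
            obtain ⟨hiT, hBi⟩ := mem_filter.1 hi
            exact mem_filter.2 ⟨hiT, (hAfB i hiT).1.trans hfe, hBi⟩

open Classical in
theorem exists_cells (T : Finset ι) (A B : ι → ℕ) (f : ℕ)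
    (hAfB : ∀ i ∈ T, A i ≤ f ∧ f ≤ B i) (K : ℕ) [NeZero K] :
    ∃ S ⊆ T, ∃ assign : ι → Fin (K * K), K * #T ≤ K * #S + 4 * #T ∧
      ∀ e, #{i ∈ S | CellSpans A B S assign e i} ≤ #{i ∈ T | A i ≤ e ∧ e ≤ B i} := by
  rcases le_or_gt #T (K * K) with hsmall | hlarge
  · obtain ⟨assign, hinj⟩ := T.exists_injOn_fin hsmall
    exact ⟨T, subset_rfl, assign, by omega, card_filter_cellSpans_le_of_injOn hinj⟩
  · exact exists_grid_cells T A B f hAfB hlarge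

end Cells

theorem one_sub_mul_sum_le_sum_of_card_le {w : ι → ℕ} {w₀ K : ℕ} {ε : ℝ} (hε : 0 ≤ ε)
    (hKε : (K : ℝ) * ε = 1) {S T : Finset ι} (hST : S ⊆ T) (hw : ∀ i ∈ T, w i = w₀)
    (hcard : K * #T ≤ K * #S + 4 * #T) :
    (1 - 6 * ε) * ∑ i ∈ T, (w i : ℝ) ≤ ∑ i ∈ S, (w i : ℝ) := by
  have hcard' : ((K * #T : ℕ) : ℝ) * ε ≤ ((K * #S + 4 * #T : ℕ) : ℝ) * ε :=
    mul_le_mul_of_nonneg_right (by exact_mod_cast hcard) hε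
  push_cast at hcard'
  have hkept : (1 - 6 * ε) * #T ≤ #S := by nlinarith [Nat.cast_nonneg (α := ℝ) #T]
  have hwsum : ∀ U ⊆ T, ∑ i ∈ U, (w i : ℝ) = #U * w₀ := fun U hU => by
    rw [sum_congr rfl fun i hi => by rw [hw i (hU hi)], sum_const, nsmul_eq_mul]
  rw [hwsum T subset_rfl, hwsum S hST, ← mul_assoc]
  exact mul_le_mul_of_nonneg_right hkept (Nat.cast_nonneg _)

/-- Box-packing lemma: given a finite set `T'` of tasks, all of identical weight `w₀` and
identical demand `d₀`, each scheduled on a subpath `P i` of the path `{1, …, m}` of exactly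
`p i` edges, such that some edge `f` lies on all the paths `P i`, there are a subset
`S ⊆ T'`, at most `1/ε²` boxes and a partition of `S` among the boxes such that
(1) on each edge, the total height of the boxes containing it is at most the total demand of
the tasks of `T'` scheduled on it, (2) `w(S) ≥ (1 - 6ε) w(T')`, and (3) the tasks assigned
to each box fit into it. -/
theorem box_packing {ι : Type} [DecidableEq ι] (m : ℕ) (w d p : ι → ℕ) (P : ι → Finset ℕ)
    (ε : ℝ) (hε : 0 < ε) (K : ℕ) (hK : (K : ℝ) = 1 / ε)
    (T' : Finset ι) (w₀ d₀ : ℕ)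
    (hw : ∀ i ∈ T', w i = w₀) (hd : ∀ i ∈ T', d i = d₀)
    (hP : ∀ i ∈ T', ∃ a b : ℕ, 1 ≤ a ∧ a ≤ b ∧ b ≤ m ∧ P i = Finset.Icc a b ∧
      (P i).card = p i)
    (f : ℕ) (hf : ∀ i ∈ T', f ∈ P i) :
    ∃ (S : Finset ι) (nB : ℕ) (boxes : Fin nB → Box) (assign : ι → Fin nB),
      S ⊆ T' ∧
      (nB : ℝ) ≤ 1 / ε ^ 2 ∧
      (∀ e ∈ Finset.Icc 1 m,
        ∑ j ∈ Finset.univ.filter (fun j : Fin nB => e ∈ (boxes j).pb), (boxes j).h ≤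
          ∑ i ∈ T'.filter (fun i => e ∈ P i), d i) ∧
      ((1 - 6 * ε) * (∑ i ∈ T', (w i : ℝ)) ≤ ∑ i ∈ S, (w i : ℝ)) ∧
      (∀ j : Fin nB, FitsP w d p P (S.filter (fun i => assign i = j)) (boxes j)) := by
  classical
  have hKε : (K : ℝ) * ε = 1 := by rw [hK]; field_simp
  have : NeZero K := ⟨by rintro rfl; simp at hKε⟩
  choose! A B hAB using hP
  have hPAB : ∀ i ∈ T', P i = Icc (A i) (B i) := fun i hi => (hAB i hi).2.2.2.1
  have hAfB : ∀ i ∈ T', A i ≤ f ∧ f ≤ B i := fun i hi => by simpa [hPAB i hi] using hf i hi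
  obtain ⟨S, hST, assign, hcard, hcount⟩ := exists_cells T' A B f hAfB K
  refine ⟨S, K * K, fun j => cellBox A B d₀ w₀ {i ∈ S | assign i = j}, assign, hST,
    le_of_eq (by rw [Nat.cast_mul, hK]; ring), fun e _ => ?_,
    one_sub_mul_sum_le_sum_of_card_le hε.le hKε hST hw hcard,
    fun j => fitsP_cellBox ((filter_subset _ _).trans hST) hw hd hPAB
      fun i hi => (hAB i hi).2.2.2.2⟩
  calc _ = d₀ * #{i ∈ S | CellSpans A B S assign e i} := sum_h_cellBox A B d₀ w₀ S assign e
    _ ≤ d₀ * #{i ∈ T' | e ∈ P i} := Nat.mul_le_mul_left _ <| (hcount e).trans_eq <|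
        congrArg card <| filter_congr fun i hi => by rw [hPAB i hi, mem_Icc]
    _ = _ := by
        rw [sum_congr rfl fun i hi => hd i (mem_filter.1 hi).1, sum_const, smul_eq_mul, mul_comm]
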